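/- Let C_m be a cyclic subgroup of GL_n(ℝ) of order m = 2^k·q with q odd and k ≥ 1. For i = 1,…,k let C_{2^{i-1}} and C_{2^i} be the unique subgroups of C_m of orders 2^{i-1} and 2^i, and define f_i := R_{C_m}( ∑_{j=1}^n ( R_{C_{2^{i-1}}}(X_j) − R_{C_{2^i}}(X_j) )² ) ∈ ℝ[X]^{C_m}. Then for every x ∈ ℂⁿ such that f(x) ∈ ℝ for all f ∈ ℝ[X]^{C_m}, one has: f_i(x) ≥ 0 for all i = 1,…,k if and only if σ·x ∈ ℝⁿ for some σ ∈ C_m. (That is, the orbit space ℝⁿ/C_m is completely described by the k invariant inequalities f₁ ≥ 0, …, f_k ≥ 0.) -/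

import Mathlib

open MvPolynomial

/-- The action of `σ ∈ GL_n(ℝ)` on real polynomials, `(σ · p)(x) = p(σ⁻¹ x)`,
given by substituting `X i ↦ ∑ j (σ⁻¹)_{i j} X j`. -/
noncomputable def polyAct {n : ℕ} (σ : Matrix.GeneralLinearGroup (Fin n) ℝ) :
    MvPolynomial (Fin n) ℝ →ₐ[ℝ] MvPolynomial (Fin n) ℝ :=
  aeval fun i => ∑ j, (σ⁻¹).val i j • X j

/-- The subalgebra `ℝ[X]^G` of `G`-invariant polynomials. -/
noncomputable def invariants {n : ℕ} (G : Subgroup (Matrix.GeneralLinearGroup (Fin n) ℝ)) :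
    Subalgebra ℝ (MvPolynomial (Fin n) ℝ) where
  carrier := {p | ∀ σ ∈ G, polyAct σ p = p}
  mul_mem' := fun hp hq σ hσ => by rw [map_mul, hp σ hσ, hq σ hσ]
  one_mem' := fun σ _ => map_one (polyAct σ)
  add_mem' := fun hp hq σ hσ => by rw [map_add, hp σ hσ, hq σ hσ]
  zero_mem' := fun σ _ => map_zero (polyAct σ)
  algebraMap_mem' := fun r σ _ => (polyAct σ).commutes r

/-- The Reynolds operator `R_H(p) = (1/|H|) ∑_{σ ∈ H} σ · p` of a (finite) subgroup `H`. -/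
noncomputable def reynolds {n : ℕ} (H : Subgroup (Matrix.GeneralLinearGroup (Fin n) ℝ))
    (p : MvPolynomial (Fin n) ℝ) : MvPolynomial (Fin n) ℝ :=
  (Nat.card H : ℝ)⁻¹ • ∑ᶠ σ ∈ (H : Set (Matrix.GeneralLinearGroup (Fin n) ℝ)), polyAct σ p

/-- The action of `σ ∈ GL_n(ℝ)` on `ℂⁿ`, via the inclusion `GL_n(ℝ) ⊆ GL_n(ℂ)`. -/
noncomputable def mAct {n : ℕ} (σ : Matrix.GeneralLinearGroup (Fin n) ℝ) (x : Fin n → ℂ) :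
    Fin n → ℂ := fun i => ∑ j, (σ.val i j : ℂ) * x j

/-! ### Auxiliary material -/

abbrev GLn (n : ℕ) := Matrix.GeneralLinearGroup (Fin n) ℝ

section Basic
variable {n : ℕ}

lemma mAct_one (x : Fin n → ℂ) : mAct 1 x = x := by
  funext i
  simp [mAct, Units.val_one, Matrix.one_apply, apply_ite, Finset.sum_ite_eq]

lemma mAct_mul (σ τ : GLn n) (x : Fin n → ℂ) : mAct σ (mAct τ x) = mAct (σ * τ) x := by
  funext i
  simp only [mAct, Units.val_mul, Matrix.mul_apply, Finset.mul_sum, Finset.sum_mul]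
  push_cast
  rw [Finset.sum_comm]
  exact Finset.sum_congr rfl fun j _ => by
    rw [Finset.sum_mul]; exact Finset.sum_congr rfl fun l _ => by ring

lemma mAct_conj (σ : GLn n) (x : Fin n → ℂ) :
    mAct σ (fun j => (starRingEnd ℂ) (x j)) = fun i => (starRingEnd ℂ) (mAct σ x i) := by
  funext i
  simp [mAct, map_sum, map_mul, Complex.conj_ofReal]

lemma im_mAct (σ : GLn n) (z : Fin n → ℂ) (hz : ∀ j, (z j).im = 0) (i : Fin n) :
    ((mAct σ z) i).im = 0 := by
  rw [mAct, Complex.im_sum]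
  refine Finset.sum_eq_zero fun j _ => ?_
  rw [Complex.mul_im, hz j, Complex.ofReal_im]
  ring

lemma aeval_polyAct (σ : GLn n) (x : Fin n → ℂ) (p : MvPolynomial (Fin n) ℝ) :
    aeval x (polyAct σ p) = aeval (mAct σ⁻¹ x) p := by
  have : (aeval x).comp (polyAct σ) = aeval (mAct σ⁻¹ x) := by
    apply MvPolynomial.algHom_ext
    intro i
    simp [polyAct, mAct, Algebra.smul_def]
  exact congrFun (congrArg DFunLike.coe this) p

lemma polyAct_comp (σ τ : GLn n) (p : MvPolynomial (Fin n) ℝ) :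
    polyAct τ (polyAct σ p) = polyAct (τ * σ) p := by
  have : (polyAct τ (n := n)).comp (polyAct σ) = polyAct (τ * σ) := by
    apply MvPolynomial.algHom_ext
    intro i
    simp only [polyAct, AlgHom.coe_comp, Function.comp_apply, aeval_X, map_sum,
      Algebra.smul_def, map_mul, AlgHom.commutes, aeval_X]
    simp only [Finset.mul_sum]
    rw [Finset.sum_comm]
    refine Finset.sum_congr rfl fun l _ => ?_
    have h : ((τ * σ)⁻¹).val i l = ∑ j, (σ⁻¹).val i j * (τ⁻¹).val j l := by
      rw [mul_inv_rev]; simp [Units.val_mul, Matrix.mul_apply]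
    rw [h, map_sum, Finset.sum_mul]
    exact Finset.sum_congr rfl fun j _ => by rw [map_mul]; ring
  exact congrFun (congrArg DFunLike.coe this) p

lemma reynolds_eq_sum (H : Subgroup (GLn n)) (hfin : (H : Set (GLn n)).Finite)
    (p : MvPolynomial (Fin n) ℝ) :
    reynolds H p = (Nat.card H : ℝ)⁻¹ • ∑ σ ∈ hfin.toFinset, polyAct σ p := by
  rw [reynolds, finsum_mem_eq_finite_toFinset_sum _ hfin]

lemma polyAct_reynolds (H : Subgroup (GLn n)) (hfin : (H : Set (GLn n)).Finite)
    (τ : GLn n) (hτ : τ ∈ H)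
    (p : MvPolynomial (Fin n) ℝ) : polyAct τ (reynolds H p) = reynolds H p := by
  rw [reynolds_eq_sum H hfin, map_smul, map_sum]
  congr 1
  refine Finset.sum_nbij' (fun σ => τ * σ) (fun σ => τ⁻¹ * σ) ?_ ?_ ?_ ?_ ?_
  · intro a ha
    simp only [Set.Finite.mem_toFinset] at *
    exact H.mul_mem hτ ha
  · intro a ha
    simp only [Set.Finite.mem_toFinset] at *
    exact H.mul_mem (H.inv_mem hτ) ha
  · intro a _; group
  · intro a _; group
  · intro a _; rw [polyAct_comp]

lemma aeval_reynolds (H : Subgroup (GLn n)) (hfin : (H : Set (GLn n)).Finite)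
    (p : MvPolynomial (Fin n) ℝ) (y : Fin n → ℂ) :
    aeval y (reynolds H p) = (Nat.card H : ℝ)⁻¹ •
      ∑ σ ∈ hfin.toFinset, aeval (mAct σ⁻¹ y) p := by
  rw [reynolds_eq_sum H hfin, map_smul, map_sum]
  congr 1
  exact Finset.sum_congr rfl fun σ _ => aeval_polyAct σ y p

lemma card_toFinset_subgroup (H : Subgroup (GLn n)) (hfin : (H : Set (GLn n)).Finite) :
    hfin.toFinset.card = Nat.card H := by
  rw [← Set.ncard_eq_toFinset_card _ hfin]
  exact (Nat.card_coe_set_eq _).symm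

end Basic

section Interp
variable {n : ℕ}

lemma exists_interpolation (T : Finset (Fin n → ℂ)) (v : (Fin n → ℂ) → ℂ) :
    ∃ Q : MvPolynomial (Fin n) ℂ, ∀ t ∈ T, aeval t Q = v t := by
  classical
  induction T using Finset.induction_on with
  | empty => exact ⟨0, by simp⟩
  | @insert t T' ht ih =>
    obtain ⟨Q', hQ'⟩ := ih
    set P : (Fin n → ℂ) → MvPolynomial (Fin n) ℂ := fun s =>
      if h : ∃ j, s j ≠ t j then X (Classical.choose h) - C (s (Classical.choose h)) else 1
      with hP
    set D : MvPolynomial (Fin n) ℂ := ∏ s ∈ T', P s with hD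
    have hDt : aeval t D ≠ 0 := by
      rw [hD, map_prod]
      apply Finset.prod_ne_zero_iff.2
      intro s hs
      have hst : s ≠ t := by rintro rfl; exact ht hs
      have hex : ∃ j, s j ≠ t j := by
        by_contra hc
        push_neg at hc
        exact hst (funext hc)
      rw [hP]
      simp only [hex, dif_pos]
      rw [map_sub, aeval_X, aeval_C]
      exact sub_ne_zero_of_ne (Ne.symm (Classical.choose_spec hex))
    have hDs : ∀ s ∈ T', aeval s D = 0 := by
      intro s hs
      rw [hD, map_prod]
      apply Finset.prod_eq_zero hs
      have hst : s ≠ t := by rintro rfl; exact ht hs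
      have hex : ∃ j, s j ≠ t j := by
        by_contra hc; push_neg at hc; exact hst (funext hc)
      rw [hP]
      simp only [hex, dif_pos]
      simp
    refine ⟨Q' + C ((v t - aeval t Q') * (aeval t D)⁻¹) * D, ?_⟩
    intro u hu
    rcases Finset.mem_insert.1 hu with rfl | hu'
    · rw [map_add, map_mul, aeval_C]
      simp only [Algebra.algebraMap_self, RingHom.id_apply]
      rw [mul_assoc, inv_mul_cancel₀ hDt, mul_one]
      ring
    · rw [map_add, map_mul, aeval_C, hDs u hu', mul_zero, add_zero, hQ' u hu']

lemma exists_real_poly (Q : MvPolynomial (Fin n) ℂ)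
    (hQ : MvPolynomial.map (starRingEnd ℂ) Q = Q) :
    ∃ h : MvPolynomial (Fin n) ℝ, map (algebraMap ℝ ℂ) h = Q := by
  classical
  refine ⟨∑ m ∈ Q.support, monomial m ((Q.coeff m).re), ?_⟩
  apply MvPolynomial.ext
  intro m'
  rw [coeff_map]
  have hreal : ∀ m, (starRingEnd ℂ) (Q.coeff m) = Q.coeff m := by
    intro m
    conv_rhs => rw [← hQ]
    rw [coeff_map]
  have him : (Q.coeff m').im = 0 := by
    have := hreal m'
    rw [Complex.conj_eq_iff_im] at this
    exact this
  rw [MvPolynomial.coeff_sum]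
  simp only [coeff_monomial]
  classical
  rw [Finset.sum_ite_eq' Q.support m' (fun m => ((Q.coeff m).re : ℝ))]
  by_cases hmem : m' ∈ Q.support
  · rw [if_pos hmem]
    have : (Q.coeff m') = ((Q.coeff m').re : ℂ) := by
      rw [Complex.ext_iff]; simp [him]
    rw [this]; simp
  · rw [if_neg hmem, map_zero]
    rw [MvPolynomial.notMem_support_iff] at hmem
    exact hmem.symm

lemma conj_aeval (Q : MvPolynomial (Fin n) ℂ) (y : Fin n → ℂ) :
    (starRingEnd ℂ) (aeval y Q) =
      aeval (fun j => (starRingEnd ℂ) (y j)) (map (starRingEnd ℂ) Q) := by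
  rw [aeval_def, aeval_def, eval₂_map]
  rw [MvPolynomial.eval₂_comp_left (starRingEnd ℂ) (algebraMap ℂ ℂ) y Q]
  rfl

end Interp

section Cyclic

lemma isCyclic_zpowers {Γ : Type*} [Group Γ] (c : Γ) : IsCyclic ↥(Subgroup.zpowers c) := by
  refine ⟨⟨⟨c, Subgroup.mem_zpowers c⟩, ?_⟩⟩
  rintro ⟨g, k, rfl⟩
  exact ⟨k, by ext; simp⟩

lemma cyclic_subgroup_unique {Γ : Type*} [Group Γ] [Fintype Γ] [IsCyclic Γ]
    (A B : Subgroup Γ) (hc : Nat.card A = Nat.card B) : A = B := by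
  classical
  set d := Nat.card A with hd
  have hd0 : 0 < d := Nat.card_pos
  have key : ∀ (C : Subgroup Γ), Nat.card C = d →
      (C : Set Γ).toFinset ⊆ Finset.univ.filter (fun g => g ^ d = 1) := by
    intro C hC g hg
    rw [Set.mem_toFinset] at hg
    rw [Finset.mem_filter]
    refine ⟨Finset.mem_univ g, ?_⟩
    have h1 : orderOf (⟨g, hg⟩ : C) ∣ Nat.card C := orderOf_dvd_natCard _
    rw [Subgroup.orderOf_mk, hC] at h1
    exact orderOf_dvd_iff_pow_eq_one.mp h1
  have hcardA : ((A : Set Γ).toFinset).card = d := by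
    rw [Set.toFinset_card, ← Nat.card_eq_fintype_card]; rfl
  have hcardB : ((B : Set Γ).toFinset).card = d := by
    rw [Set.toFinset_card, ← Nat.card_eq_fintype_card]; exact hc.symm
  have hfilter := IsCyclic.card_pow_eq_one_le (α := Γ) hd0
  have hA : (A : Set Γ).toFinset = Finset.univ.filter (fun g => g ^ d = 1) :=
    Finset.eq_of_subset_of_card_le (key A rfl) (by rw [hcardA]; exact hfilter)
  have hB : (B : Set Γ).toFinset = Finset.univ.filter (fun g => g ^ d = 1) :=
    Finset.eq_of_subset_of_card_le (key B hc.symm) (by rw [hcardB]; exact hfilter)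
  apply SetLike.ext'
  have := hA.trans hB.symm
  rwa [Set.toFinset_inj] at this

lemma subgroup_eq_of_le_of_card_eq {Γ : Type*} [Group Γ] (G : Subgroup Γ) [Finite G]
    [IsCyclic G] (H₁ H₂ : Subgroup Γ) (h1 : H₁ ≤ G) (h2 : H₂ ≤ G)
    (hc : Nat.card H₁ = Nat.card H₂) : H₁ = H₂ := by
  haveI : Fintype G := Fintype.ofFinite _
  have e1 := Subgroup.subgroupOfEquivOfLe h1
  have e2 := Subgroup.subgroupOfEquivOfLe h2
  have hcc : Nat.card (H₁.subgroupOf G) = Nat.card (H₂.subgroupOf G) := by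
    rw [Nat.card_congr e1.toEquiv, Nat.card_congr e2.toEquiv]; exact hc
  have := cyclic_subgroup_unique (H₁.subgroupOf G) (H₂.subgroupOf G) hcc
  have := congrArg (Subgroup.map G.subtype) this
  rwa [Subgroup.subgroupOf_map_subtype, Subgroup.subgroupOf_map_subtype,
    inf_of_le_left h1, inf_of_le_left h2] at this

lemma exists_two_power_elt {Γ : Type*} [Group Γ] (G : Subgroup Γ) [Finite G] (τ : Γ)
    (hτ : τ ∈ G) (hτ2 : orderOf τ ≠ 0) :
    ∃ (s : Γ) (b : ℕ) (u : ℕ), Odd u ∧ s = τ ^ u ∧ orderOf s = 2 ^ b ∧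
      orderOf (s ^ 2) = 2 ^ (b - 1) ∧ (b = 0 → s = 1) ∧ 2 ^ b ∣ Nat.card G := by
  set t := orderOf τ with ht
  set b := t.factorization 2 with hb
  set u := t / 2 ^ b with hu
  have hudvd : u ∣ t := Nat.ordCompl_dvd t 2
  have hu0 : u ≠ 0 := (Nat.ordCompl_pos 2 hτ2).ne'
  have hodd : Odd u := by
    have h2 : ¬ 2 ∣ u := Nat.not_dvd_ordCompl Nat.prime_two hτ2
    rcases Nat.mod_two_eq_zero_or_one u with h | h
    · exact absurd (Nat.dvd_of_mod_eq_zero h) h2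
    · exact Nat.odd_iff.2 h
  have hmul : 2 ^ b * u = t := Nat.ordProj_mul_ordCompl_eq_self t 2
  have hos : orderOf (τ ^ u) = 2 ^ b := by
    rw [orderOf_pow' τ hu0, ← ht, Nat.gcd_eq_right hudvd, ← hmul,
      Nat.mul_div_cancel _ (Nat.pos_of_ne_zero hu0)]
  refine ⟨τ ^ u, b, u, hodd, rfl, hos, ?_, ?_, ?_⟩
  · by_cases hb0 : b = 0
    · have h1 : τ ^ u = 1 := orderOf_eq_one_iff.mp (by rw [hos, hb0, pow_zero])
      rw [h1, one_pow, orderOf_one, hb0]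
      rfl
    · rw [orderOf_pow' _ (two_ne_zero), hos,
        Nat.gcd_eq_right (dvd_pow_self 2 hb0)]
      conv_lhs => rw [← Nat.succ_pred_eq_of_pos (Nat.pos_of_ne_zero hb0), pow_succ,
        Nat.mul_div_cancel _ (by norm_num : (0:ℕ) < 2)]
      rfl
  · intro hb0
    exact orderOf_eq_one_iff.mp (by rw [hos, hb0, pow_zero])
  · rw [← hos]
    have h1 : orderOf (τ ^ u) ∣ t := by
      rw [hos, ← hmul]; exact Dvd.intro u rfl
    have h2 : t ∣ Nat.card G := by
      rw [ht, ← Subgroup.orderOf_mk τ hτ]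
      exact orderOf_dvd_natCard _
    exact h1.trans h2

end Cyclic

section Helpers
variable {n : ℕ}

lemma real_smul_re (r : ℝ) (z : ℂ) : (r • z).re = r * z.re := by
  simp [Complex.real_smul]

lemma real_smul_im (r : ℝ) (z : ℂ) : (r • z).im = r * z.im := by
  simp [Complex.real_smul]

lemma re_sq_nonneg {z : ℂ} (h : z.im = 0) : 0 ≤ (z ^ 2).re := by
  rw [sq, Complex.mul_re, h]
  simpa using mul_self_nonneg z.re

lemma sq_I_mul_re (a : ℝ) : ((Complex.I * (a : ℂ)) ^ 2).re = -(a ^ 2) := by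
  have h : (Complex.I * (a : ℂ)) ^ 2 = -((a : ℂ) ^ 2) := by
    rw [mul_pow, Complex.I_sq]; ring
  rw [h]
  simp [← Complex.ofReal_pow]

lemma sub_re_eq_I_mul_im (w : ℂ) : w - (w.re : ℂ) = Complex.I * (w.im : ℂ) := by
  apply Complex.ext <;> simp

lemma im_reynolds_X (H : Subgroup (GLn n)) (hfin : (H : Set (GLn n)).Finite)
    (y : Fin n → ℂ) (hy : ∀ j, (y j).im = 0) (j : Fin n) :
    (aeval y (reynolds H (X j))).im = 0 := by
  rw [aeval_reynolds H hfin, real_smul_im, Complex.im_sum]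
  rw [Finset.sum_eq_zero, mul_zero]
  intro κ _
  rw [aeval_X]
  exact im_mAct _ _ hy j

lemma scalar_arith1 (d : ℕ) (hd : d ≠ 0) (z : ℂ) :
    (((d : ℕ) : ℝ))⁻¹ • ((d : ℕ) • z) = z := by
  rw [nsmul_eq_mul, Complex.real_smul]
  push_cast
  rw [← mul_assoc, inv_mul_cancel₀ (by exact_mod_cast hd : ((d:ℕ):ℂ) ≠ 0), one_mul]

lemma scalar_arith2 (b : ℕ) (hb : 1 ≤ b) (z : ℂ) :
    (((2^b : ℕ) : ℝ))⁻¹ • ((2^(b-1) : ℕ) • z + (2^(b-1) : ℕ) • (starRingEnd ℂ) z)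
      = ((z.re : ℝ) : ℂ) := by
  rw [nsmul_eq_mul, nsmul_eq_mul, ← mul_add, Complex.add_conj, Complex.real_smul]
  push_cast
  rw [show b = (b-1)+1 by omega, pow_succ]
  have h2 : ((2:ℂ))^(b-1) ≠ 0 := pow_ne_zero _ two_ne_zero
  field_simp
  rw [Nat.add_sub_cancel]

end Helpers

/-- let `C_m ⊆ GL_n(ℝ)` be cyclic of order `m = 2^k·q`, `q` odd, `k ≥ 1`,
with `K_i` the unique subgroup of order `2^i` for `i ≤ k`, and
`fᵢ = R_{C_m}(∑ⱼ (R_{K_{i−1}}(Xⱼ) − R_{K_i}(Xⱼ))²)`. Then for every `x ∈ ℂⁿ` at which all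
`C_m`-invariants are real: `fᵢ(x) ≥ 0` for `i = 1,…,k` iff `σ·x ∈ ℝⁿ` for some
`σ ∈ C_m`. -/
theorem statement_19 {n m q k : ℕ}
    (G : Subgroup (Matrix.GeneralLinearGroup (Fin n) ℝ)) [Finite G]
    (c : Matrix.GeneralLinearGroup (Fin n) ℝ) (hcyc : G = Subgroup.zpowers c)
    (hm : Nat.card G = m) (hq : Odd q) (hk : 1 ≤ k) (hfact : m = 2 ^ k * q)
    (Ks : ℕ → Subgroup (Matrix.GeneralLinearGroup (Fin n) ℝ))
    (hKG : ∀ i ≤ k, Ks i ≤ G)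
    (hKcard : ∀ i ≤ k, Nat.card (Ks i) = 2 ^ i)
    (f : ℕ → MvPolynomial (Fin n) ℝ)
    (hfdef : ∀ i, 1 ≤ i → i ≤ k →
      f i = reynolds G (∑ j, (reynolds (Ks (i - 1)) (X j) - reynolds (Ks i) (X j)) ^ 2))
    (x : Fin n → ℂ)
    (hreal : ∀ p ∈ invariants G, (aeval x p).im = 0) :
    (∀ i, 1 ≤ i → i ≤ k → 0 ≤ (aeval x (f i)).re) ↔
      ∃ σ ∈ G, ∀ j, ((mAct σ x) j).im = 0 := by
  classical
  have hGfin : (G : Set (GLn n)).Finite := Set.toFinite _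
  have hm0 : 0 < m := by rw [← hm]; exact Nat.card_pos
  have finKs : ∀ i, i ≤ k → Finite (Ks i) := by
    intro i hi
    have : 0 < Nat.card (Ks i) := by rw [hKcard i hi]; positivity
    exact (Nat.card_pos_iff.mp this).2
  have hKsfin : ∀ i, i ≤ k → ((Ks i : Set (GLn n))).Finite := by
    intro i hi
    haveI := finKs i hi
    exact Set.toFinite _
  have hcomm : ∀ a b : GLn n, a ∈ G → b ∈ G → a * b = b * a := by
    intro a b ha hb
    rw [hcyc] at ha hb
    obtain ⟨i, rfl⟩ := ha
    obtain ⟨j, rfl⟩ := hb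
    rw [← zpow_add, ← zpow_add, add_comm]
  set cjv : (Fin n → ℂ) → (Fin n → ℂ) := fun z j => (starRingEnd ℂ) (z j) with hcjv
  have hconj_act : ∀ (ρ : GLn n) z, mAct ρ (cjv z) = cjv (mAct ρ z) := fun ρ z => mAct_conj ρ z
  have hcc : ∀ z, cjv (cjv z) = z := fun z => funext fun j => Complex.conj_conj (z j)
  -- x real implies all f i nonnegative at x
  have main_nonneg : (∀ j, (x j).im = 0) → ∀ i, 1 ≤ i → i ≤ k → 0 ≤ (aeval x (f i)).re := by
    intro hxreal i h1 hik
    rw [hfdef i h1 hik, aeval_reynolds G hGfin _ x, real_smul_re]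
    apply mul_nonneg (by positivity)
    rw [Complex.re_sum]
    apply Finset.sum_nonneg
    intro σ hσ
    have hyreal : ∀ j, ((mAct σ⁻¹ x) j).im = 0 := fun j => im_mAct _ _ hxreal j
    rw [map_sum, Complex.re_sum]
    apply Finset.sum_nonneg
    intro j _
    rw [map_pow, map_sub]
    refine re_sq_nonneg ?_
    rw [Complex.sub_im, im_reynolds_X _ (hKsfin (i-1) (by omega)) _ hyreal,
      im_reynolds_X _ (hKsfin i hik) _ hyreal]
    ring
  constructor
  · -- hard direction
    intro hpos
    suffices hxreal : ∀ j, (x j).im = 0 by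
      refine ⟨1, one_mem G, fun j => ?_⟩
      rw [mAct_one]
      exact hxreal j
    by_contra hxr
    push_neg at hxr
    obtain ⟨j₀, hj₀⟩ := hxr
    -- Step 1: the conjugate of x is in the orbit of x
    have horbit : ∃ τ ∈ G, mAct τ x = cjv x := by
      by_contra hno
      push_neg at hno
      set A : Finset (Fin n → ℂ) := hGfin.toFinset.image (fun σ => mAct σ⁻¹ x) with hA
      set B : Finset (Fin n → ℂ) := hGfin.toFinset.image (fun σ => mAct σ⁻¹ (cjv x)) with hB
      set T : Finset (Fin n → ℂ) := A ∪ B with hT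
      set v : (Fin n → ℂ) → ℂ := fun y => if y ∈ A then Complex.I else -Complex.I with hv
      obtain ⟨Q₀, hQ₀⟩ := exists_interpolation T v
      set Q : MvPolynomial (Fin n) ℂ := C (2⁻¹ : ℂ) * (Q₀ + map (starRingEnd ℂ) Q₀) with hQdef
      have hconjconj : ((starRingEnd ℂ).comp (starRingEnd ℂ) : ℂ →+* ℂ) = RingHom.id ℂ := by
        ext z
        simp
      have hc2 : (starRingEnd ℂ) (2⁻¹ : ℂ) = 2⁻¹ := by
        have : ((2:ℂ) : ℂ).im = 0 := rfl
        rw [map_inv₀, Complex.conj_eq_iff_im.mpr rfl]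
      have hQc : map (starRingEnd ℂ) Q = Q := by
        rw [hQdef, map_mul, MvPolynomial.map_C, hc2, map_add, MvPolynomial.map_map,
          hconjconj, MvPolynomial.map_id, add_comm]
      obtain ⟨hp, hmap⟩ := exists_real_poly Q hQc
      have hvalI : ∀ σ ∈ hGfin.toFinset, aeval (mAct σ⁻¹ x) hp = Complex.I := by
        intro σ hσ
        have hσG : σ ∈ G := (Set.Finite.mem_toFinset _).mp hσ
        set y := mAct σ⁻¹ x with hy
        have hy1 : y ∈ A := by
          rw [hA]
          exact Finset.mem_image_of_mem _ hσ
        have hyT : y ∈ T := Finset.mem_union_left _ hy1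
        have hybar : cjv y = mAct σ⁻¹ (cjv x) := (hconj_act σ⁻¹ x).symm
        have hybarT : cjv y ∈ T := by
          refine Finset.mem_union_right _ ?_
          rw [hB, hybar]
          exact Finset.mem_image_of_mem _ hσ
        have hybarA : cjv y ∉ A := by
          intro hmem
          rw [hA] at hmem
          obtain ⟨ρ, hρ, heq⟩ := Finset.mem_image.mp hmem
          have hρG : ρ ∈ G := (Set.Finite.mem_toFinset _).mp hρ
          apply hno (σ * ρ⁻¹) (G.mul_mem hσG (G.inv_mem hρG))
          rw [← mAct_mul, heq, hybar, mAct_mul, mul_inv_cancel, mAct_one]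
        have e1 : aeval y Q₀ = Complex.I := by
          rw [hQ₀ _ hyT, hv]
          exact if_pos hy1
        have e2 : aeval (cjv y) Q₀ = -Complex.I := by
          rw [hQ₀ _ hybarT, hv]
          exact if_neg hybarA
        have e3 : aeval y (map (starRingEnd ℂ) Q₀) = Complex.I := by
          have h := conj_aeval Q₀ (cjv y)
          rw [e2] at h
          have hccy : (fun j => (starRingEnd ℂ) ((cjv y) j)) = y := hcc y
          rw [hccy] at h
          rw [← h]
          simp
        have : aeval y hp = aeval y Q := by
          rw [← aeval_map_algebraMap ℂ y hp, hmap]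
        rw [this, hQdef, map_mul, aeval_C, map_add, e1, e3]
        simp only [Algebra.algebraMap_self, RingHom.id_apply]
        ring
      have hinv : reynolds G hp ∈ invariants G := fun σ hσ => polyAct_reynolds G hGfin σ hσ hp
      have hcontra := hreal _ hinv
      rw [aeval_reynolds G hGfin hp x, real_smul_im, Complex.im_sum] at hcontra
      rw [Finset.sum_congr rfl (fun σ hσ => by rw [hvalI σ hσ])] at hcontra
      simp only [Complex.I_im, Finset.sum_const, nsmul_eq_mul, mul_one] at hcontra
      rw [card_toFinset_subgroup G hGfin, hm] at hcontra
      have : (m : ℝ) ≠ 0 := by positivity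
      field_simp at hcontra
      exact one_ne_zero hcontra
    obtain ⟨τ, hτG, hτx⟩ := horbit
    -- Step 2: extract the 2-part
    have hord : orderOf τ ≠ 0 := by
      rw [← Subgroup.orderOf_mk τ hτG]
      exact (orderOf_pos _).ne'
    obtain ⟨s, b, u, hodd, hsu, hos, hos2, hb0, hdvd⟩ := exists_two_power_elt G τ hτG hord
    have hsG : s ∈ G := by rw [hsu]; exact pow_mem hτG u
    have hpow : ∀ l : ℕ, mAct (τ ^ (2 * l)) x = x ∧ mAct (τ ^ (2 * l + 1)) x = cjv x := by
      intro l
      induction l with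
      | zero =>
        constructor
        · rw [mul_zero, pow_zero, mAct_one]
        · rw [mul_zero, zero_add, pow_one]; exact hτx
      | succ l ih =>
        have heven : mAct (τ ^ (2 * (l + 1))) x = x := by
          have h2 : 2 * (l + 1) = (2 * l + 1) + 1 := by ring
          rw [h2, pow_succ, ← mAct_mul, hτx, hconj_act, ih.2, hcc]
        refine ⟨heven, ?_⟩
        rw [pow_succ, ← mAct_mul, hτx, hconj_act]
        have h3 : mAct (τ ^ (2 * (l + 1))) (cjv (cjv x)) = cjv (cjv x) := by
          rw [hcc]; exact heven
        rw [hcc] at h3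
        rw [heven]
    have hsx : mAct s x = cjv x := by
      obtain ⟨l, hl⟩ := hodd
      rw [hsu, hl]
      exact (hpow l).2
    have hb1 : 1 ≤ b := by
      by_contra hcon
      have hs1 : s = 1 := hb0 (by omega)
      rw [hs1, mAct_one] at hsx
      apply hj₀
      rw [← Complex.conj_eq_iff_im]
      exact (congrFun hsx j₀).symm
    have hs2x : mAct (s ^ 2) x = x := by
      rw [hsu, ← pow_mul, show u * 2 = 2 * u by ring]
      exact (hpow u).1
    -- stabilizer subgroup of x
    set St : Subgroup (GLn n) :=
      { carrier := {ρ : GLn n | mAct ρ x = x}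
        one_mem' := mAct_one x
        mul_mem' := by
          intro a b ha hb
          show mAct (a * b) x = x
          rw [← mAct_mul, hb, ha]
        inv_mem' := by
          intro a ha
          show mAct a⁻¹ x = x
          calc mAct a⁻¹ x = mAct a⁻¹ (mAct a x) := by rw [ha]
            _ = mAct (a⁻¹ * a) x := mAct_mul _ _ _
            _ = x := by rw [inv_mul_cancel, mAct_one] } with hSt
    have hstabx : ∀ κ ∈ Subgroup.zpowers (s ^ 2), mAct κ x = x := fun κ hκ =>
      Subgroup.zpowers_le.mpr (show s ^ 2 ∈ St from hs2x) hκ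
    have hbk : b ≤ k := by
      rw [hm, hfact] at hdvd
      have hq2 : ¬ (2 ∣ q) := by
        rw [Nat.odd_iff] at hq
        omega
      have hcop : Nat.Coprime (2 ^ b) q :=
        Nat.Coprime.pow_left _ ((Nat.Prime.coprime_iff_not_dvd Nat.prime_two).mpr hq2)
      have h2 : (2 : ℕ) ^ b ∣ 2 ^ k := Nat.Coprime.dvd_of_dvd_mul_right hcop hdvd
      have h3 := Nat.le_of_dvd (by positivity) h2
      exact (Nat.pow_le_pow_iff_right (by norm_num)).mp h3
    haveI hGcyc : IsCyclic G := by rw [hcyc]; exact isCyclic_zpowers c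
    have hKb : Ks b = Subgroup.zpowers s := by
      apply subgroup_eq_of_le_of_card_eq G _ _ (hKG b hbk) (Subgroup.zpowers_le.mpr hsG)
      rw [hKcard b hbk, Nat.card_zpowers, hos]
    have hKa : Ks (b - 1) = Subgroup.zpowers (s ^ 2) := by
      apply subgroup_eq_of_le_of_card_eq G _ _ (hKG (b - 1) (by omega))
        (Subgroup.zpowers_le.mpr (pow_mem hsG 2))
      rw [hKcard (b - 1) (by omega), Nat.card_zpowers, hos2]
    have hKafin : ((Subgroup.zpowers (s ^ 2) : Set (GLn n))).Finite := by
      rw [← hKa]; exact hKsfin (b - 1) (by omega)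
    have hKbfin : ((Subgroup.zpowers s : Set (GLn n))).Finite := by
      rw [← hKb]; exact hKsfin b hbk
    have hcardKa : Nat.card (Subgroup.zpowers (s ^ 2)) = 2 ^ (b - 1) := by
      rw [Nat.card_zpowers, hos2]
    have hcardKb : Nat.card (Subgroup.zpowers s) = 2 ^ b := by
      rw [Nat.card_zpowers, hos]
    -- per-point evaluation
    have hterm : ∀ σ, σ ∈ hGfin.toFinset →
        (aeval (mAct σ⁻¹ x) (∑ j, (reynolds (Ks (b - 1)) (X j) - reynolds (Ks b) (X j)) ^ 2)).re
          = - ∑ j, ((mAct σ⁻¹ x) j).im ^ 2 := by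
      intro σ hσ
      have hσG : σ ∈ G := (Set.Finite.mem_toFinset _).mp hσ
      set y := mAct σ⁻¹ x with hy
      have hyc : mAct s y = cjv y := by
        rw [hy, mAct_mul, hcomm s σ⁻¹ hsG (G.inv_mem hσG), ← mAct_mul, hsx, hconj_act]
      have hfixy : ∀ κ ∈ Subgroup.zpowers (s ^ 2), mAct κ y = y := by
        intro κ hκ
        have hκG : κ ∈ G := (hcyc ▸ Subgroup.zpowers_le.mpr (hcyc ▸ pow_mem hsG 2) : Subgroup.zpowers (s^2) ≤ G) hκ
        rw [hy, mAct_mul, hcomm κ σ⁻¹ hκG (G.inv_mem hσG), ← mAct_mul, hstabx κ hκ]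
      have hyne : cjv y ≠ y := by
        intro hcy
        apply hj₀
        have hxy : x = mAct σ y := by
          rw [hy, mAct_mul, mul_inv_cancel, mAct_one]
        have : cjv x = x := by
          rw [hxy, ← hconj_act, hcy]
        rw [← Complex.conj_eq_iff_im]
        exact congrFun this j₀
      have hsiy : mAct s⁻¹ y = cjv y := by
        have h1 : mAct s⁻¹ (mAct s y) = y := by
          rw [mAct_mul, inv_mul_cancel, mAct_one]
        rw [hyc, hconj_act] at h1
        have := congrArg cjv h1
        rw [hcc] at this
        rw [this]
      -- Reynolds values
      have hRKa : ∀ j, aeval y (reynolds (Ks (b - 1)) (X j)) = y j := by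
        intro j
        rw [hKa, aeval_reynolds _ hKafin]
        have : ∀ κ ∈ hKafin.toFinset, aeval (mAct κ⁻¹ y) (X j : MvPolynomial (Fin n) ℝ) = y j := by
          intro κ hκ
          have hκm : κ ∈ Subgroup.zpowers (s ^ 2) := (Set.Finite.mem_toFinset _).mp hκ
          rw [aeval_X, hfixy κ⁻¹ ((Subgroup.zpowers (s ^ 2)).inv_mem hκm)]
        rw [Finset.sum_congr rfl this, Finset.sum_const, card_toFinset_subgroup _ hKafin,
          hcardKa]
        exact scalar_arith1 _ (by positivity) (y j)
      have hp2 : ∀ w : ℤ, (s ^ 2) ^ w = s ^ (2 * w) := by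
        intro w
        rw [← zpow_natCast s 2, ← zpow_mul]
        norm_num
      have hsplit : hKbfin.toFinset = hKafin.toFinset ∪ hKafin.toFinset.image (fun κ => s * κ) := by
        ext g
        simp only [Set.Finite.mem_toFinset, Finset.mem_union, Finset.mem_image,
          Set.Finite.mem_toFinset, SetLike.mem_coe, Subgroup.mem_zpowers_iff]
        constructor
        · rintro ⟨z, rfl⟩
          rcases Int.even_or_odd z with ⟨w, hw⟩ | ⟨w, hw⟩
          · left
            exact ⟨w, by rw [hp2, hw, two_mul]⟩
          · right
            exact ⟨(s ^ 2) ^ w, ⟨w, rfl⟩, by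
              rw [hp2, hw, show 2 * w + 1 = 1 + 2 * w by ring, zpow_add, zpow_one]⟩
        · rintro (⟨w, rfl⟩ | ⟨κ, ⟨w, rfl⟩, rfl⟩)
          · exact ⟨2 * w, (hp2 w).symm⟩
          · exact ⟨1 + 2 * w, by rw [zpow_add, zpow_one, hp2]⟩
      have hdisj : Disjoint hKafin.toFinset (hKafin.toFinset.image (fun κ => s * κ)) := by
        rw [Finset.disjoint_left]
        rintro g hg hmem
        obtain ⟨κ, hκ, rfl⟩ := Finset.mem_image.mp hmem
        have hg' : s * κ ∈ Subgroup.zpowers (s ^ 2) := (Set.Finite.mem_toFinset _).mp hg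
        have hκ' : κ ∈ Subgroup.zpowers (s ^ 2) := (Set.Finite.mem_toFinset _).mp hκ
        have hsin : s ∈ Subgroup.zpowers (s ^ 2) := by
          have h5 := (Subgroup.zpowers (s ^ 2)).mul_mem hg' ((Subgroup.zpowers (s ^ 2)).inv_mem hκ')
          rwa [mul_inv_cancel_right] at h5
        have h6 : mAct s y = y := hfixy s hsin
        rw [hyc] at h6
        exact hyne h6
      have hRKb : ∀ j, aeval y (reynolds (Ks b) (X j)) = (((y j).re : ℝ) : ℂ) := by
        intro j
        rw [hKb, aeval_reynolds _ hKbfin]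
        have hstep : ∑ κ ∈ hKbfin.toFinset, aeval (mAct κ⁻¹ y) (X j : MvPolynomial (Fin n) ℝ)
            = ∑ κ ∈ hKafin.toFinset, aeval (mAct κ⁻¹ y) (X j : MvPolynomial (Fin n) ℝ)
              + ∑ κ ∈ hKafin.toFinset, aeval (mAct (s * κ)⁻¹ y) (X j : MvPolynomial (Fin n) ℝ) := by
          rw [hsplit, Finset.sum_union hdisj, Finset.sum_image]
          intro a _ b' _ h
          exact mul_left_cancel h
        rw [hstep]
        have hA1 : ∀ κ ∈ hKafin.toFinset, aeval (mAct κ⁻¹ y) (X j : MvPolynomial (Fin n) ℝ) = y j := by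
          intro κ hκ
          have hκm : κ ∈ Subgroup.zpowers (s ^ 2) := (Set.Finite.mem_toFinset _).mp hκ
          rw [aeval_X, hfixy κ⁻¹ ((Subgroup.zpowers (s ^ 2)).inv_mem hκm)]
        have hA2 : ∀ κ ∈ hKafin.toFinset, aeval (mAct (s * κ)⁻¹ y) (X j : MvPolynomial (Fin n) ℝ)
            = (starRingEnd ℂ) (y j) := by
          intro κ hκ
          have hκm : κ ∈ Subgroup.zpowers (s ^ 2) := (Set.Finite.mem_toFinset _).mp hκ
          rw [aeval_X, mul_inv_rev, ← mAct_mul, hsiy]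
          have h7 : mAct κ⁻¹ (cjv y) = cjv (mAct κ⁻¹ y) := hconj_act κ⁻¹ y
          rw [h7, hfixy κ⁻¹ ((Subgroup.zpowers (s ^ 2)).inv_mem hκm)]
        rw [Finset.sum_congr rfl hA1, Finset.sum_congr rfl hA2, Finset.sum_const,
          Finset.sum_const, card_toFinset_subgroup _ hKafin, hcardKa, hcardKb]
        exact scalar_arith2 b hb1 (y j)
      have perj : ∀ j : Fin n,
          (aeval y ((reynolds (Ks (b-1)) (X j) - reynolds (Ks b) (X j))^2)).re
            = -(((y j).im)^2) := by
        intro j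
        rw [map_pow, map_sub, hRKa j, hRKb j, sub_re_eq_I_mul_im (y j)]
        exact sq_I_mul_re _
      rw [map_sum, Complex.re_sum, Finset.sum_congr rfl (fun j _ => perj j)]
      rw [Finset.sum_neg_distrib]
    -- conclusion of the hard direction
    have hcard0 : (0:ℝ) < (Nat.card G : ℝ) := by exact_mod_cast Nat.card_pos
    have hlt : (aeval x (f b)).re < 0 := by
      rw [hfdef b hb1 hbk, aeval_reynolds G hGfin _ x, real_smul_re, Complex.re_sum]
      have hone : (1 : GLn n) ∈ hGfin.toFinset := (Set.Finite.mem_toFinset _).mpr (one_mem G)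
      have hlt1 : (aeval (mAct (1:GLn n)⁻¹ x)
          (∑ j, (reynolds (Ks (b - 1)) (X j) - reynolds (Ks b) (X j)) ^ 2)).re < 0 := by
        rw [hterm 1 hone, inv_one, mAct_one]
        have hp0 : 0 < ∑ j, (x j).im ^ 2 :=
          Finset.sum_pos' (fun j _ => sq_nonneg _)
            ⟨j₀, Finset.mem_univ _, lt_of_le_of_ne (sq_nonneg _) (Ne.symm (pow_ne_zero 2 hj₀))⟩
        linarith
      have hneg : ∑ σ ∈ hGfin.toFinset, (aeval (mAct σ⁻¹ x)
          (∑ j, (reynolds (Ks (b - 1)) (X j) - reynolds (Ks b) (X j)) ^ 2)).re < 0 := by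
        have hsum := Finset.sum_lt_sum (f := fun σ : GLn n => (aeval (mAct σ⁻¹ x)
            (∑ j, (reynolds (Ks (b - 1)) (X j) - reynolds (Ks b) (X j)) ^ 2)).re)
          (g := fun _ => (0:ℝ))
          (fun σ hσ => by
            show (aeval (mAct σ⁻¹ x)
              (∑ j, (reynolds (Ks (b - 1)) (X j) - reynolds (Ks b) (X j)) ^ 2)).re ≤ (0:ℝ)
            rw [hterm σ hσ]
            exact neg_nonpos.mpr (Finset.sum_nonneg fun j _ => sq_nonneg _))
          ⟨1, hone, hlt1⟩
        simpa using hsum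
      exact mul_neg_of_pos_of_neg (inv_pos.mpr hcard0) hneg
    have := hpos b hb1 hbk
    linarith
  · -- easy direction
    rintro ⟨σ, hσ, hσreal⟩
    have hxreal : ∀ j, (x j).im = 0 := by
      have hxeq : x = mAct σ⁻¹ (mAct σ x) := by
        rw [mAct_mul, inv_mul_cancel, mAct_one]
      intro j
      rw [hxeq]
      exact im_mAct _ _ hσreal j
    exact main_nonneg hxreal
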